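/- arXiv:1306.2690 — 3 statements merged into one kernel-verified Lean document; each statement's English description precedes it below -/
import Mathlib

section
/- For every positive integer t, the elementary abelian 2-group G = (ℤ/2ℤ)^{2t+2} contains a Hadamard difference set C with parameters (2^{2t+2}, 2^{2t+1} − 2^t, 2^{2t} − 2^t) such that 0 ∉ C, and the Cayley graph Cay(G,C) is a Ramanujan graph. -/
open scoped Classical

/-- The Cayley graph of an additive group `G` with connection set `D`:
vertices are the elements of `G`, and `u`, `v` are adjacent iff `u - v ∈ D`
(for `0 ∉ D` and `D = -D` this is a simple graph). -/
def cayley {G : Type*} [AddGroup G] (D : Finset G) : SimpleGraph G :=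
  SimpleGraph.fromRel (fun u v => u - v ∈ D)

/-- `μ` is an eigenvalue of the (real) adjacency matrix of the finite graph `X`. -/
noncomputable def HasAdjEigenvalue {V : Type*} [Fintype V] (X : SimpleGraph V) (μ : ℝ) : Prop :=
  ∃ f : V → ℝ, f ≠ 0 ∧ (X.adjMatrix ℝ).mulVec f = μ • f

/-- A finite graph `X` is a `k`-regular Ramanujan graph: it is connected,
`k`-regular, and every adjacency eigenvalue `λ` with `|λ| ≠ k` satisfies
`|λ| ≤ 2√(k-1)`. -/
noncomputable def IsRamanujan {V : Type*} [Fintype V] (X : SimpleGraph V) (k : ℕ) : Prop :=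
  X.Connected ∧ X.IsRegularOfDegree k ∧
    ∀ μ : ℝ, HasAdjEigenvalue X μ → |μ| ≠ (k : ℝ) →
      |μ| ≤ 2 * Real.sqrt ((k : ℝ) - 1)

/-!
The set is the quadric `C = {Q = 1}` of the hyperbolic quadratic form
`Q(x, y) = x₁y₁ + ⋯ + x_m y_m` on `𝔽₂^{2m}`, `m = t + 1`. The form is bent: both
`∑ (-1)^Q(z) = 2^m` and, for `g ≠ 0`, `∑ (-1)^(Q(z) + Q(z + g)) = 0` factor over the `m`
coordinate pairs, and writing indicators as `(1 - (-1)^Q) / 2` turns them into `|C|` and the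
constant number of representations of `g` as a difference in `C`.

In characteristic `2` we have `C = -C`, so `Cay(G, C)` is strongly regular with `λ = μ`. Then
`A² = (k - μ) I + μ J` and `J` kills every eigenvector orthogonal to the constants, so every
eigenvalue other than `k` is `±√(k - μ) = ±2^t`, well below `2√(k - 1)`.
-/

open Finset SimpleGraph Matrix

def IsDifferenceSet {G : Type*} [AddGroup G] [DecidableEq G] (D : Finset G) (μ : ℕ) : Prop :=
  ∀ g : G, g ≠ 0 → #{p ∈ D ×ˢ D | p.1 - p.2 = g} = μ

section CayleyGraph

variable {G : Type*} [AddCommGroup G] {D : Finset G}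

lemma cayley_adj_iff (hD₀ : (0 : G) ∉ D) (hD : ∀ x ∈ D, -x ∈ D) {u v : G} :
    (cayley D).Adj u v ↔ u - v ∈ D := by
  rw [cayley, fromRel_adj, ← neg_sub v u]
  refine ⟨fun ⟨_, h⟩ => h.elim id fun h => ?_, fun h => ⟨?_, .inl h⟩⟩
  · simpa using hD _ h
  · rintro rfl; simp_all

variable [Fintype G]

lemma cayley_isRegularOfDegree (hD₀ : (0 : G) ∉ D) (hD : ∀ x ∈ D, -x ∈ D) :
    (cayley D).IsRegularOfDegree #D := by
  intro u
  rw [← card_neighborFinset_eq_degree]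
  refine card_nbij' (u - ·) (u - ·) (fun w hw => ?_) (fun c hc => ?_)
    (fun _ _ => sub_sub_cancel _ _) (fun _ _ => sub_sub_cancel _ _)
  · simpa [cayley_adj_iff hD₀ hD] using hw
  · simpa [cayley_adj_iff hD₀ hD] using hc

variable [DecidableEq G]

lemma card_commonNeighbors_cayley (hD₀ : (0 : G) ∉ D) (hD : ∀ x ∈ D, -x ∈ D) (u v : G) :
    Fintype.card ((cayley D).commonNeighbors u v) = #{p ∈ D ×ˢ D | p.1 - p.2 = u - v} := by
  have hsnd {p : G × G} (hp : p.1 - p.2 = u - v) : v - (u - p.1) = p.2 := by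
    rw [← sub_eq_zero, show v - (u - p.1) - p.2 = p.1 - p.2 - (u - v) by abel, hp, sub_self]
  rw [← Set.toFinset_card]
  refine card_nbij' (fun w => (u - w, v - w)) (u - ·.1) (fun w hw => ?_) (fun p hp => ?_)
    (fun _ _ => sub_sub_cancel _ _) (fun p hp => ?_)
  · simp_all [mem_commonNeighbors, cayley_adj_iff hD₀ hD]
  · obtain ⟨hpD, hpuv⟩ := mem_filter.mp hp
    simp_all [mem_commonNeighbors, cayley_adj_iff hD₀ hD, hsnd hpuv]
  · simp [hsnd (mem_filter.mp hp).2]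

theorem cayley_isSRGWith (hD₀ : (0 : G) ∉ D) (hD : ∀ x ∈ D, -x ∈ D) {μ : ℕ}
    (hμ : IsDifferenceSet D μ) :
    (cayley D).IsSRGWith (Fintype.card G) #D μ μ where
  card := rfl
  regular := cayley_isRegularOfDegree hD₀ hD
  of_adj u v huv := by rw [card_commonNeighbors_cayley hD₀ hD, hμ _ (sub_ne_zero.mpr huv.ne)]
  of_not_adj u v huv _ := by rw [card_commonNeighbors_cayley hD₀ hD, hμ _ (sub_ne_zero.mpr huv)]

end CayleyGraph

namespace SimpleGraph

variable {V : Type*} [Fintype V] {X : SimpleGraph V} {n k ℓ μ : ℕ}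

lemma IsRegularOfDegree.sum_eq_zero_of_mulVec_eq_smul (hX : X.IsRegularOfDegree k) {θ : ℝ}
    {f : V → ℝ} (hf : X.adjMatrix ℝ *ᵥ f = θ • f) (hθ : θ ≠ k) : ∑ v, f v = 0 := by
  have hcol : (1 : V → ℝ) ᵥ* X.adjMatrix ℝ = (k : ℝ) • 1 := by
    ext v; simp [hX v]
  have h := dotProduct_mulVec (1 : V → ℝ) (X.adjMatrix ℝ) f
  rw [hf, hcol] at h
  simp only [dotProduct_smul, smul_dotProduct, one_dotProduct, smul_eq_mul] at h
  exact (mul_eq_mul_right_iff.mp h).resolve_left hθ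

lemma IsSRGWith.sq_eigenvalue (h : X.IsSRGWith n k ℓ μ) {θ : ℝ} (hθ : HasAdjEigenvalue X θ)
    (hθk : θ ≠ k) : θ ^ 2 = ((ℓ : ℝ) - μ) * θ + ((k : ℝ) - μ) := by
  obtain ⟨f, hf0, hf⟩ := hθ
  have hsum := h.regular.sum_eq_zero_of_mulVec_eq_smul hf hθk
  -- `A + Aᶜ = J - I`, and `J f = 0`.
  have hcompl : Xᶜ.adjMatrix ℝ *ᵥ f = -f - θ • f := by
    rw [← add_sub_cancel_left (X.adjMatrix ℝ) (Xᶜ.adjMatrix ℝ),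
      isCompl_compl.adjMatrix_add_adjMatrix_eq_adjMatrix_completeGraph ℝ,
      adjMatrix_completeGraph_eq_of_one_sub_one (α := ℝ), sub_mulVec, sub_mulVec, hf]
    ext v
    simp [mulVec, dotProduct, hsum]
  have hsq := congrArg (· *ᵥ f) h.matrix_eq
  simp only [sq, ← mulVec_mulVec, hf, mulVec_smul, add_mulVec, smul_mulVec, one_mulVec,
    hcompl] at hsq
  obtain ⟨v, hv⟩ := Function.ne_iff.mp hf0
  have hv' := congrFun hsq v
  simp only [Pi.smul_apply, smul_eq_mul, nsmul_eq_mul, Algebra.mul_smul_comm, Pi.add_apply,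
    Pi.mul_apply, Pi.natCast_apply, Pi.sub_apply, Pi.neg_apply] at hv'
  apply mul_right_cancel₀ hv
  linear_combination hv'

lemma IsSRGWith.connected [Nonempty V] (h : X.IsSRGWith n k ℓ μ) (hμ : μ ≠ 0) :
    X.Connected := by
  refine (connected_iff X).mpr ⟨fun u v => ?_, inferInstance⟩
  obtain rfl | huv := eq_or_ne u v
  · rfl
  by_cases hadj : X.Adj u v
  · exact hadj.reachable
  obtain ⟨w, huw, hwv⟩ : (X.commonNeighbors u v).Nonempty := by
    rw [← Set.nonempty_coe_sort, ← Fintype.card_pos_iff, h.of_not_adj huv hadj]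
    exact Nat.pos_of_ne_zero hμ
  exact huw.reachable.trans (X.adj_symm hwv).reachable

lemma IsSRGWith.abs_eigenvalue_eq (h : X.IsSRGWith n k μ μ) {θ : ℝ}
    (hθ : HasAdjEigenvalue X θ) (hθk : |θ| ≠ k) : |θ| = √((k : ℝ) - μ) := by
  have hθk' : θ ≠ k := fun hθ => hθk (by rw [hθ, abs_of_nonneg k.cast_nonneg])
  rw [← Real.sqrt_sq_eq_abs, h.sq_eigenvalue hθ hθk', sub_self, zero_mul, zero_add]

theorem IsSRGWith.isRamanujan [Nonempty V] (h : X.IsSRGWith n k μ μ) (hμ : μ ≠ 0)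
    (hk : (k : ℝ) - μ ≤ 4 * ((k : ℝ) - 1)) : IsRamanujan X k := by
  refine ⟨h.connected hμ, h.regular, fun θ hθ hθk => ?_⟩
  calc |θ| = √((k : ℝ) - μ) := h.abs_eigenvalue_eq hθ hθk
    _ ≤ √(4 * ((k : ℝ) - 1)) := Real.sqrt_le_sqrt hk
    _ = 2 * √((k : ℝ) - 1) := by
      rw [Real.sqrt_mul zero_le_four, show (4 : ℝ) = 2 ^ 2 by norm_num, Real.sqrt_sq zero_le_two]

end SimpleGraph

namespace ZMod

def negOnePow (a : ZMod 2) : ℤ := (-1) ^ a.val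

lemma negOnePow_add : ∀ a b : ZMod 2, negOnePow (a + b) = negOnePow a * negOnePow b := by decide

lemma negOnePow_sum {ι : Type*} (s : Finset ι) (f : ι → ZMod 2) :
    negOnePow (∑ i ∈ s, f i) = ∏ i ∈ s, negOnePow (f i) := by
  induction s using Finset.cons_induction with
  | empty => rfl
  | cons i s hi ih => rw [sum_cons, prod_cons, negOnePow_add, ih]

end ZMod

open ZMod

section LevelSet

lemma two_mul_card_filter_eq_one {α : Type*} [Fintype α] (f : α → ZMod 2) :
    2 * (#{x | f x = 1} : ℤ) = Fintype.card α - ∑ x, negOnePow (f x) := by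
  have hpt : ∀ a : ZMod 2, 2 * (if a = 1 then 1 else 0 : ℤ) = 1 - negOnePow a := by decide
  rw [natCast_card_filter, mul_sum, Fintype.sum_congr _ _ fun x => hpt (f x), sum_sub_distrib,
    sum_const, card_univ, nsmul_one]

lemma card_filter_sub_eq {G : Type*} [AddCommGroup G] [DecidableEq G] (C : Finset G) (g : G) :
    #{p ∈ C ×ˢ C | p.1 - p.2 = g} = #{x ∈ C | x + g ∈ C} := by
  refine card_nbij' Prod.snd (fun x => (x + g, x)) ?_ (fun x hx => by simp_all) ?_ (fun _ _ => rfl)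
  all_goals
    rintro ⟨a, b⟩ hab
    obtain ⟨⟨ha, hb⟩, rfl⟩ : (a ∈ C ∧ b ∈ C) ∧ a - b = g := by simpa using hab
    simp [ha, hb]

variable {G : Type*} [AddCommGroup G] [Fintype G] (f : G → ZMod 2)

lemma four_mul_card_filter_eq_one_and_eq_one (g : G) :
    4 * (#{x | f x = 1 ∧ f (x + g) = 1} : ℤ) =
      Fintype.card G - 2 * ∑ x, negOnePow (f x) +
        ∑ x, negOnePow (f x) * negOnePow (f (x + g)) := by
  have hpt : ∀ a b : ZMod 2, 4 * (if a = 1 ∧ b = 1 then 1 else 0 : ℤ) =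
      1 - negOnePow a - negOnePow b + negOnePow a * negOnePow b := by decide
  have hshift : ∑ x, negOnePow (f (x + g)) = ∑ x, negOnePow (f x) :=
    Fintype.sum_equiv (Equiv.addRight g) _ _ fun _ => rfl
  rw [natCast_card_filter, mul_sum, Fintype.sum_congr _ _ fun x => hpt (f x) (f (x + g)),
    sum_add_distrib, sum_sub_distrib, sum_sub_distrib, hshift, sum_const, card_univ, nsmul_one]
  ring

end LevelSet

section HyperbolicForm

variable {ι : Type*} [Fintype ι]

def hyperbolicForm (x : ι → ZMod 2 × ZMod 2) : ZMod 2 := ∑ i, (x i).1 * (x i).2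

lemma sum_negOnePow_hyperbolicForm :
    ∑ x : ι → ZMod 2 × ZMod 2, negOnePow (hyperbolicForm x) = 2 ^ Fintype.card ι := by
  have hpair : ∑ p : ZMod 2 × ZMod 2, negOnePow (p.1 * p.2) = 2 := by decide
  simp_rw [hyperbolicForm, negOnePow_sum]
  rw [← Fintype.prod_sum fun _ (p : ZMod 2 × ZMod 2) => negOnePow (p.1 * p.2), hpair, prod_const,
    card_univ]

lemma sum_negOnePow_hyperbolicForm_mul_add {g : ι → ZMod 2 × ZMod 2} (hg : g ≠ 0) :
    ∑ x, negOnePow (hyperbolicForm x) * negOnePow (hyperbolicForm (x + g)) = 0 := by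
  -- For `c ≠ 0`, `p ↦ Q p + Q (p + c)` is affine with nonzero linear part.
  have hpair : ∀ c : ZMod 2 × ZMod 2, c ≠ 0 →
      ∑ p : ZMod 2 × ZMod 2, negOnePow (p.1 * p.2) * negOnePow ((p + c).1 * (p + c).2) = 0 := by
    decide
  obtain ⟨j, hj⟩ := Function.ne_iff.mp hg
  simp_rw [hyperbolicForm, negOnePow_sum, ← prod_mul_distrib, Pi.add_apply]
  rw [← Fintype.prod_sum fun i (p : ZMod 2 × ZMod 2) =>
    negOnePow (p.1 * p.2) * negOnePow ((p + g i).1 * (p + g i).2)]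
  exact prod_eq_zero (mem_univ j) (hpair _ hj)

end HyperbolicForm

section Quadric

variable {ι H : Type*} [Fintype ι] [AddCommGroup H] [Fintype H]

lemma card_eq_four_pow_of_addEquiv (e : (ι → ZMod 2 × ZMod 2) ≃+ H) :
    Fintype.card H = 4 ^ Fintype.card ι := by
  simp [← Fintype.card_congr e.toEquiv]

variable (e : (ι → ZMod 2 × ZMod 2) ≃+ H)

def hyperbolicQuadric : Finset H := {x | hyperbolicForm (e.symm x) = 1}

lemma zero_notMem_hyperbolicQuadric : 0 ∉ hyperbolicQuadric e := by
  rw [hyperbolicQuadric, mem_filter]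
  simp [hyperbolicForm]

lemma sum_negOnePow_hyperbolicForm_symm :
    ∑ x, negOnePow (hyperbolicForm (e.symm x)) = 2 ^ Fintype.card ι :=
  (Fintype.sum_equiv e.symm.toEquiv _ (fun y => negOnePow (hyperbolicForm y)) fun _ => rfl).trans
    sum_negOnePow_hyperbolicForm

lemma two_mul_card_hyperbolicQuadric :
    2 * (#(hyperbolicQuadric e) : ℤ) = 4 ^ Fintype.card ι - 2 ^ Fintype.card ι := by
  rw [hyperbolicQuadric, two_mul_card_filter_eq_one, sum_negOnePow_hyperbolicForm_symm,
    card_eq_four_pow_of_addEquiv e]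
  norm_cast

lemma four_mul_card_hyperbolicQuadric_sub [DecidableEq H] {g : H} (hg : g ≠ 0) :
    4 * (#{p ∈ hyperbolicQuadric e ×ˢ hyperbolicQuadric e | p.1 - p.2 = g} : ℤ) =
      4 ^ Fintype.card ι - 2 * 2 ^ Fintype.card ι := by
  have hauto : ∑ x, negOnePow (hyperbolicForm (e.symm x)) *
      negOnePow (hyperbolicForm (e.symm (x + g))) = 0 := by
    rw [← sum_negOnePow_hyperbolicForm_mul_add (e.symm.map_ne_zero_iff.mpr hg)]
    exact Fintype.sum_equiv e.symm.toEquiv _ _ fun x => by simp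
  have hshift : #{x ∈ hyperbolicQuadric e | x + g ∈ hyperbolicQuadric e} =
      #{x | hyperbolicForm (e.symm x) = 1 ∧ hyperbolicForm (e.symm (x + g)) = 1} := by
    congr 1; ext; simp [hyperbolicQuadric]
  rw [card_filter_sub_eq, hshift, four_mul_card_filter_eq_one_and_eq_one, hauto,
    sum_negOnePow_hyperbolicForm_symm, card_eq_four_pow_of_addEquiv e]
  push_cast
  ring

end Quadric

section Hadamard

variable (t : ℕ)

-- Any `ZMod 2`-linear isomorphism will do: which coordinates get paired up is irrelevant.
noncomputable def finPairsAddEquiv :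
    (Fin (t + 1) → ZMod 2 × ZMod 2) ≃+ (Fin (2 * t + 2) → ZMod 2) :=
  (LinearEquiv.ofFinrankEq (R := ZMod 2) _ _ (by simp [Module.finrank_pi_fintype]; ring)).toAddEquiv

lemma card_hyperbolicQuadric_finPairsAddEquiv :
    #(hyperbolicQuadric (finPairsAddEquiv t)) = 2 ^ (2 * t + 1) - 2 ^ t := by
  have h := two_mul_card_hyperbolicQuadric (finPairsAddEquiv t)
  have hle : 2 ^ t ≤ 2 ^ (2 * t + 1) := Nat.pow_le_pow_right two_pos (by omega)
  rw [Fintype.card_fin] at h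
  zify [hle]
  rw [show (4 : ℤ) = 2 ^ 2 by norm_num, ← pow_mul, show 2 * (t + 1) = 2 * t + 1 + 1 by ring,
    pow_succ _ (2 * t + 1), pow_succ _ t] at h
  linarith

lemma isDifferenceSet_hyperbolicQuadric_finPairsAddEquiv :
    IsDifferenceSet (hyperbolicQuadric (finPairsAddEquiv t)) (2 ^ (2 * t) - 2 ^ t) := by
  intro g hg
  have h := four_mul_card_hyperbolicQuadric_sub (finPairsAddEquiv t) hg
  have hle : 2 ^ t ≤ 2 ^ (2 * t) := Nat.pow_le_pow_right two_pos (by omega)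
  rw [Fintype.card_fin] at h
  zify [hle]
  rw [show (4 : ℤ) = 2 ^ 2 by norm_num, ← pow_mul, show 2 * (t + 1) = 2 * t + 2 by ring,
    pow_add, pow_succ _ t] at h
  linarith

lemma hadamard_degree_sub_le_four_mul (ht : 0 < t) :
    ((2 ^ (2 * t + 1) - 2 ^ t : ℕ) : ℝ) - ((2 ^ (2 * t) - 2 ^ t : ℕ) : ℝ) ≤
      4 * (((2 ^ (2 * t + 1) - 2 ^ t : ℕ) : ℝ) - 1) := by
  have hle : 2 ^ t ≤ 2 ^ (2 * t) := Nat.pow_le_pow_right two_pos (by omega)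
  have hle' : 2 ^ t ≤ 2 ^ (2 * t + 1) := Nat.pow_le_pow_right two_pos (by omega)
  have h2 : (2 : ℝ) ≤ 2 ^ t := le_self_pow₀ one_le_two ht.ne'
  push_cast [hle, hle']
  rw [pow_succ, pow_mul']
  nlinarith

end Hadamard

/-- For every positive integer `t`, the elementary abelian 2-group
`(ℤ/2ℤ)^(2t+2)` contains a Hadamard difference set `C` with parameters
`(2^(2t+2), 2^(2t+1) − 2^t, 2^(2t) − 2^t)` with `0 ∉ C`, and the Cayley graph
`Cay(G,C)` is a Ramanujan graph. -/
theorem elementary_abelian_hadamard_ramanujan (t : ℕ) (ht : 0 < t) :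
    ∃ C : Finset (Fin (2 * t + 2) → ZMod 2),
      (0 : Fin (2 * t + 2) → ZMod 2) ∉ C ∧
      C.card = 2 ^ (2 * t + 1) - 2 ^ t ∧
      (∀ g : Fin (2 * t + 2) → ZMod 2, g ≠ 0 →
        ((C ×ˢ C).filter (fun p => p.1 - p.2 = g)).card
          = 2 ^ (2 * t) - 2 ^ t) ∧
      IsRamanujan (cayley C) (2 ^ (2 * t + 1) - 2 ^ t) := by
  set C := hyperbolicQuadric (finPairsAddEquiv t)
  have hC₀ : 0 ∉ C := zero_notMem_hyperbolicQuadric _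
  have hCneg : ∀ x ∈ C, -x ∈ C := fun x hx => by
    rwa [show -x = x from funext fun i => ZMod.neg_eq_self_mod_two (x i)]
  have hCcard := card_hyperbolicQuadric_finPairsAddEquiv t
  have hCdiff := isDifferenceSet_hyperbolicQuadric_finPairsAddEquiv t
  have hsrg := cayley_isSRGWith hC₀ hCneg hCdiff
  rw [hCcard] at hsrg
  refine ⟨C, hC₀, hCcard, hCdiff, hsrg.isRamanujan ?_ (hadamard_degree_sub_le_four_mul t ht)⟩
  exact Nat.sub_ne_zero_of_lt (Nat.pow_lt_pow_right one_lt_two (by omega))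
end

section
/- Let q = 2^m with m ≥ 1 and let D = {z ∈ F_q : z ≠ 0, Tr_m(z) = Tr_m(z^{−1}) = 1}. For a ∈ F_q, define χ_a(D) = ∑_{z ∈ D} (−1)^{Tr_m(az)}. Then χ_1(D) = −(2^m + 1 + k_m(1))/4, and for every a ∈ F_q with a ≠ 0 and a ≠ 1, χ_a(D) = (k_m(a+1) − k_m(a))/4. -/
/-! With `ψ(x) = (-1)^{Tr x}`, the indicator of `Tr z = 1` is `(1 - ψ z) / 2`, so the indicator
of `D` is `(1 - ψ z)(1 - ψ z⁻¹) / 4`. Expanding `4 χ_a(D)` gives four sums over `z ≠ 0`: the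
character sums of `ψ(a z)` and `ψ((a + 1) z)`, which are `-1` unless the multiplier vanishes
(then `2^m - 1`), and the Kloosterman sums `k(a)` and `k(a + 1)`, with `k(0) = -1`. -/

open scoped Classical

noncomputable instance (m : ℕ) : Fintype (GaloisField 2 m) := Fintype.ofFinite _

/-- The binary Kloosterman sum `k_m(a) = ∑_{x ∈ F_{2^m}^*} (−1)^{Tr_m(ax + x⁻¹)}`,
where `Tr_m` is the absolute trace of `F_{2^m} = GaloisField 2 m` over `F_2` and
`(−1)^c` for `c ∈ F_2` means `1` if `c = 0` and `−1` if `c = 1`. -/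
noncomputable def kloos (m : ℕ) (a : GaloisField 2 m) : ℤ :=
  ∑ x ∈ Finset.univ.filter (fun x : GaloisField 2 m => x ≠ 0),
    (-1 : ℤ) ^ ((Algebra.trace (ZMod 2) (GaloisField 2 m)) (a * x + x⁻¹)).val

/-- The set `D = {z ∈ F_{2^m} : z ≠ 0, Tr_m(z) = Tr_m(z⁻¹) = 1}`. -/
noncomputable def Dset (m : ℕ) : Finset (GaloisField 2 m) :=
  Finset.univ.filter (fun z : GaloisField 2 m => z ≠ 0 ∧
    Algebra.trace (ZMod 2) (GaloisField 2 m) z = 1 ∧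
    Algebra.trace (ZMod 2) (GaloisField 2 m) z⁻¹ = 1)
/-- The character sum `χ_a(D) = ∑_{z ∈ D} (−1)^{Tr_m(az)}`. -/
noncomputable def chiD (m : ℕ) (a : GaloisField 2 m) : ℤ :=
  ∑ z ∈ Dset m,
    (-1 : ℤ) ^ ((Algebra.trace (ZMod 2) (GaloisField 2 m)) (a * z)).val

open Finset AddChar

lemma sum_filter_ne_eq_sub {α G : Type*} [Fintype α] [DecidableEq α] [AddCommGroup G]
    (a : α) (f : α → G) : ∑ x ∈ univ with x ≠ a, f x = ∑ x, f x - f a := by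
  rw [filter_ne', sum_erase_eq_sub (mem_univ a)]

section TraceSign

lemma neg_one_pow_val_add (u v : ZMod 2) :
    (-1 : ℤ) ^ (u + v).val = (-1) ^ u.val * (-1) ^ v.val := by
  revert u v; decide

variable (F : Type*) [Field F] [Algebra (ZMod 2) F]

noncomputable def traceSign : AddChar F ℤ where
  toFun x := (-1) ^ (Algebra.trace (ZMod 2) F x).val
  map_zero_eq_one' := by simp
  map_add_eq_mul' x y := by rw [map_add, neg_one_pow_val_add]

lemma traceSign_apply (x : F) :
    traceSign F x = (-1) ^ (Algebra.trace (ZMod 2) F x).val := rfl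

variable [Fintype F]

lemma traceSign_ne_one : traceSign F ≠ 1 := by
  obtain ⟨c, hc⟩ := Algebra.trace_surjective (ZMod 2) F 1
  refine ne_one_iff.2 ⟨c, ?_⟩
  rw [traceSign_apply, hc]
  decide

lemma sum_ne_zero_traceSign_mul (c : F) :
    ∑ z ∈ univ with z ≠ 0, traceSign F (c * z) =
      if c = 0 then (Fintype.card F : ℤ) - 1 else -1 := by
  simp_rw [sum_filter_ne_eq_sub, mul_comm c,
    sum_mulShift c (.of_ne_one (traceSign_ne_one F))]
  split_ifs <;> simp

lemma sum_ne_zero_traceSign_inv : ∑ z ∈ univ with z ≠ 0, traceSign F z⁻¹ = -1 := by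
  rw [sum_filter_ne_eq_sub, inv_zero, map_zero_eq_one,
    Fintype.sum_equiv (Equiv.inv F) (fun z => traceSign F z⁻¹) (traceSign F) fun _ => rfl,
    sum_eq_zero_of_ne_one (traceSign_ne_one F), zero_sub]

lemma four_mul_ite_and (u v : ZMod 2) :
    4 * (if u = 1 ∧ v = 1 then 1 else 0 : ℤ) = (1 - (-1) ^ u.val) * (1 - (-1) ^ v.val) := by
  revert u v; decide

lemma four_mul_sum_trace_eq_one_trace_inv_eq_one (a : F) :
    4 * ∑ z ∈ univ with z ≠ 0 ∧ Algebra.trace (ZMod 2) F z = 1 ∧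
        Algebra.trace (ZMod 2) F z⁻¹ = 1, traceSign F (a * z) =
      ∑ z ∈ univ with z ≠ 0, traceSign F (a * z) -
        ∑ z ∈ univ with z ≠ 0, traceSign F ((a + 1) * z) -
        ∑ z ∈ univ with z ≠ 0, traceSign F (a * z + z⁻¹) +
        ∑ z ∈ univ with z ≠ 0, traceSign F ((a + 1) * z + z⁻¹) := by
  rw [← filter_filter, sum_filter, mul_sum, ← sum_sub_distrib, ← sum_sub_distrib,
    ← sum_add_distrib]
  refine sum_congr rfl fun z _ => ?_
  rw [← mul_boole, mul_left_comm, four_mul_ite_and]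
  simp only [add_one_mul, map_add_eq_mul, traceSign_apply F z, traceSign_apply F z⁻¹]
  ring

end TraceSign

lemma four_mul_chiD (m : ℕ) (a : GaloisField 2 m) :
    4 * chiD m a =
      ∑ z ∈ univ with z ≠ 0, traceSign _ (a * z) -
        ∑ z ∈ univ with z ≠ 0, traceSign _ ((a + 1) * z) - kloos m a + kloos m (a + 1) :=
  four_mul_sum_trace_eq_one_trace_inv_eq_one _ a

lemma kloos_zero (m : ℕ) : kloos m 0 = -1 := by
  rw [← sum_ne_zero_traceSign_inv (GaloisField 2 m), kloos]
  simp only [zero_mul, zero_add, traceSign_apply]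

/-- For `D = {z ∈ F_{2^m} : z ≠ 0, Tr_m(z) = Tr_m(z⁻¹) = 1}` one has
`χ₁(D) = −(2^m + 1 + k_m(1))/4`, and for every `a ≠ 0, 1`,
`χ_a(D) = (k_m(a+1) − k_m(a))/4`. -/
theorem chiD_eval (m : ℕ) (hm : 1 ≤ m) :
    ((chiD m 1 : ℚ) = -((2 ^ m + 1 + (kloos m 1 : ℚ)) / 4)) ∧
    (∀ a : GaloisField 2 m, a ≠ 0 → a ≠ 1 →
      (chiD m a : ℚ) = ((kloos m (a + 1) : ℚ) - (kloos m a : ℚ)) / 4) := by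
  have hcard : Fintype.card (GaloisField 2 m) = 2 ^ m := by
    rw [← Nat.card_eq_fintype_card, GaloisField.card 2 m (by omega)]
  constructor
  · have h := four_mul_chiD m 1
    rw [CharTwo.add_self_eq_zero, sum_ne_zero_traceSign_mul, sum_ne_zero_traceSign_mul,
      if_neg one_ne_zero, if_pos rfl, hcard, kloos_zero] at h
    have hq : (4 * chiD m 1 : ℚ) = -1 - (2 ^ m - 1) - kloos m 1 + -1 := by exact_mod_cast h
    linarith
  · intro a ha0 ha1
    have h := four_mul_chiD m a
    have ha1' : a + 1 ≠ 0 := fun h => ha1 (CharTwo.add_eq_zero.1 h)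
    rw [sum_ne_zero_traceSign_mul, sum_ne_zero_traceSign_mul, if_neg ha0, if_neg ha1'] at h
    have hq : (4 * chiD m a : ℚ) = -1 - -1 - kloos m a + kloos m (a + 1) := by exact_mod_cast h
    linarith
end

section
/- Let q = 2^m with m ≥ 1 and, for i, j ∈ {0,1}, let D_{i,j} = {z ∈ F_q : z ≠ 0, Tr_m(z) = i, Tr_m(z^{−1}) = j}. Then 4·|D_{i,j}| = 2^m − 1 − (−1)^j − (−1)^i + (−1)^{i+j}·k_m(1); in particular |D_{0,0}| = 2^{m−2} + (k_m(1) − 3)/4 and |D_{1,0}| = |D_{0,1}| = 2^{m−2} − (k_m(1) + 1)/4. -/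
/-!
Write `ψ(z) = (-1)^{Tr z}`, an additive character of `F_{2^m}` that is nontrivial because the
trace is onto `F_2`. Since `(1 + (-1)^i ψ(z)) (1 + (-1)^j ψ(z⁻¹))` is `4` on `D_{i,j}` and `0`
elsewhere on `F^*`, summing it over `F^*` counts `4 |D_{i,j}|`. Expanding the product, the
constant term gives `2^m - 1`, the two linear terms give `-1` each (the sum of `ψ` over `F`
vanishes, and `z ↦ z⁻¹` permutes `F^*`), and the cross term is the Kloosterman sum
`k_m(1) = ∑_{z ≠ 0} ψ(z) ψ(z⁻¹)`.
-/

open scoped Classical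

/-- The set `D_{i,j} = {z ∈ F_{2^m} : z ≠ 0, Tr_m(z) = i, Tr_m(z⁻¹) = j}`,
where `i, j ∈ {0,1}` are identified with elements of `F_2`. -/
noncomputable def Dij (m : ℕ) (i j : ZMod 2) : Finset (GaloisField 2 m) :=
  Finset.univ.filter (fun z : GaloisField 2 m => z ≠ 0 ∧
    Algebra.trace (ZMod 2) (GaloisField 2 m) z = (i : ZMod 2) ∧
    Algebra.trace (ZMod 2) (GaloisField 2 m) z⁻¹ = (j : ZMod 2))

open Finset

def signChar : AddChar (ZMod 2) ℤ where
  toFun a := (-1) ^ a.val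
  map_zero_eq_one' := rfl
  map_add_eq_mul' := by decide

lemma signChar_apply (a : ZMod 2) : signChar a = (-1) ^ a.val := rfl

lemma signChar_ne_one : signChar ≠ 1 :=
  AddChar.ne_one_iff.2 ⟨1, by decide⟩

-- `(1 + (-1)^(a + i)) / 2` is the indicator of `a = i`.
lemma one_add_signChar_mul_one_add_signChar (i j a b : ZMod 2) :
    (1 + signChar i * signChar a) * (1 + signChar j * signChar b) =
      if a = i ∧ b = j then 4 else 0 := by
  revert i j a b; decide

lemma sum_filter_ne_zero_inv {G M : Type*} [GroupWithZero G] [Fintype G] [AddCommMonoid M]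
    (f : G → M) : ∑ z ∈ univ.filter (· ≠ 0), f z⁻¹ = ∑ z ∈ univ.filter (· ≠ 0), f z :=
  sum_equiv (Equiv.inv G) (by simp) (fun _ _ => rfl)

lemma sum_filter_ne_zero_one {G : Type*} [Zero G] [Fintype G] :
    ∑ _z ∈ univ.filter (· ≠ (0 : G)), (1 : ℤ) = Fintype.card G - 1 := by
  rw [filter_ne', sum_erase_eq_sub (mem_univ 0), sum_const, card_univ, nsmul_one]

section TraceChar

variable (F : Type*) [Field F] [Algebra (ZMod 2) F]

noncomputable def traceChar : AddChar F ℤ :=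
  signChar.compAddMonoidHom (Algebra.trace (ZMod 2) F).toAddMonoidHom

variable {F}

lemma traceChar_apply (z : F) : traceChar F z = signChar (Algebra.trace (ZMod 2) F z) := rfl

variable [Fintype F]

lemma traceChar_ne_one : traceChar F ≠ 1 := by
  intro h
  apply signChar_ne_one
  exact AddChar.compAddMonoidHom_injective_left (Algebra.trace (ZMod 2) F).toAddMonoidHom
    (Algebra.trace_surjective (ZMod 2) F) h

lemma sum_filter_ne_zero_traceChar : ∑ z ∈ univ.filter (· ≠ 0), traceChar F z = -1 := by
  rw [filter_ne', sum_erase_eq_sub (mem_univ 0), AddChar.sum_eq_zero_of_ne_one traceChar_ne_one,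
    AddChar.map_zero_eq_one, zero_sub]

variable (F) in
lemma four_mul_card_trace_eq_trace_inv_eq (i j : ZMod 2) :
    4 * (#(univ.filter fun z : F => z ≠ 0 ∧
        Algebra.trace (ZMod 2) F z = i ∧ Algebra.trace (ZMod 2) F z⁻¹ = j) : ℤ) =
      Fintype.card F - 1 - signChar j - signChar i + signChar (i + j) *
        ∑ z ∈ univ.filter (· ≠ 0), traceChar F z * traceChar F z⁻¹ := by
  calc (4 * #(univ.filter fun z : F => z ≠ 0 ∧
        Algebra.trace (ZMod 2) F z = i ∧ Algebra.trace (ZMod 2) F z⁻¹ = j) : ℤ)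
      = ∑ z ∈ univ.filter (· ≠ 0),
          (1 + signChar i * traceChar F z) * (1 + signChar j * traceChar F z⁻¹) := by
        simp only [traceChar_apply, one_add_signChar_mul_one_add_signChar, ← sum_filter,
          filter_filter, sum_const, nsmul_eq_mul, mul_comm]
    _ = ∑ z ∈ univ.filter (· ≠ 0), (1 + signChar i * traceChar F z
          + signChar j * traceChar F z⁻¹
          + signChar i * signChar j * (traceChar F z * traceChar F z⁻¹)) :=
        sum_congr rfl fun _ _ => by ring
    _ = _ := by
        rw [sum_add_distrib, sum_add_distrib, sum_add_distrib, ← mul_sum, ← mul_sum, ← mul_sum,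
          sum_filter_ne_zero_one, sum_filter_ne_zero_inv (traceChar F ·),
          sum_filter_ne_zero_traceChar, AddChar.map_add_eq_mul]
        ring

end TraceChar

lemma kloos_one_eq_sum_traceChar (m : ℕ) :
    kloos m 1 = ∑ z ∈ univ.filter (· ≠ 0),
      traceChar (GaloisField 2 m) z * traceChar (GaloisField 2 m) z⁻¹ :=
  sum_congr rfl fun z _ => by rw [one_mul, ← AddChar.map_add_eq_mul]; rfl

/-- `4·|D_{i,j}| = 2^m − 1 − (−1)^j − (−1)^i + (−1)^{i+j}·k_m(1)`; in
particular `|D_{0,0}| = 2^{m−2} + (k_m(1) − 3)/4` and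
`|D_{1,0}| = |D_{0,1}| = 2^{m−2} − (k_m(1) + 1)/4`. -/
theorem card_Dij (m : ℕ) (hm : 1 ≤ m) :
    (∀ i j : ZMod 2,
      4 * ((Dij m i j).card : ℤ) =
        2 ^ m - 1 - (-1 : ℤ) ^ j.val - (-1 : ℤ) ^ i.val
          + (-1 : ℤ) ^ (i.val + j.val) * kloos m 1) ∧
    ((Dij m 0 0).card : ℚ) = (2 : ℚ) ^ ((m : ℤ) - 2) + ((kloos m 1 : ℚ) - 3) / 4 ∧
    ((Dij m 1 0).card : ℚ) = (2 : ℚ) ^ ((m : ℤ) - 2) - ((kloos m 1 : ℚ) + 1) / 4 ∧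
    (Dij m 1 0).card = (Dij m 0 1).card := by
  have hcard : Fintype.card (GaloisField 2 m) = 2 ^ m := by
    rw [← Nat.card_eq_fintype_card]; exact GaloisField.card 2 m (by omega)
  have main : ∀ i j : ZMod 2, 4 * ((Dij m i j).card : ℤ) =
      2 ^ m - 1 - (-1 : ℤ) ^ j.val - (-1 : ℤ) ^ i.val
        + (-1 : ℤ) ^ (i.val + j.val) * kloos m 1 := by
    intro i j
    have := four_mul_card_trace_eq_trace_inv_eq (GaloisField 2 m) i j
    rw [hcard, ← kloos_one_eq_sum_traceChar, AddChar.map_add_eq_mul] at this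
    simpa only [Dij, signChar_apply, ← pow_add, Nat.cast_pow, Nat.cast_ofNat] using this
  have h00 := main 0 0
  have h10 := main 1 0
  have h01 := main 0 1
  simp only [ZMod.val_zero, ZMod.val_one, pow_zero, pow_one, add_zero, zero_add, one_mul]
    at h00 h10 h01
  have hpow : (2 : ℚ) ^ ((m : ℤ) - 2) = 2 ^ m / 4 := by
    rw [zpow_sub₀ two_ne_zero, zpow_natCast]; norm_num
  refine ⟨main, ?_, ?_, ?_⟩
  · qify at h00; rw [hpow]; linarith
  · qify at h10; rw [hpow]; linarith
  · omega
end
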